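/- arXiv:math/0003178 — 4 statements merged into one kernel-verified Lean document; each statement's English description precedes it below -/
import Mathlib

section
/- Let $M$ be a finite set of $n$ nonzero vectors $a_1,\dots,a_n$ spanning $\mathbb{R}^d$, and let $\Delta(M)$ be the simplicial complex of subsets $I\subseteq\{1,\dots,n\}$ such that $\{a_i : i\in I\}$ is linearly independent. Let $\chi(M)=\sum_{I\in\Delta(M)}(-1)^{|I|}$ (including the empty set with sign $+1$). Then $|\chi(M)|\le\binom{n-1}{d}$. -/
/-!
Deletion–contraction on a vector `a e ≠ 0`, which exists when the rank `d` is positive. Since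
`I ∪ {e}` is independent exactly when the image of `I` in `V ⧸ K ∙ a e` is,
`χ(E) = χ(E \ e) - χ(E / e)`. If `a e` is not in the span of the other vectors (a coloop), the
two minors have the same independent sets and `χ(E) = 0`. Otherwise both minors span, on
`#E - 1` vectors, in ranks `d` and `d - 1`, and Pascal's rule
`C(m, d) = C(m - 1, d) + C(m - 1, d - 1)` closes the induction on `#E`.
-/

open Finset Submodule Module

section IndepEulerChar

variable (K : Type*) {V ι : Type*} [DivisionRing K] [AddCommGroup V] [Module K V]

open Classical in
noncomputable def indepEulerChar (a : ι → V) (E : Finset ι) : ℤ :=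
  ∑ I ∈ E.powerset, if LinearIndepOn K a (I : Set ι) then (-1) ^ #I else 0

variable {K}

theorem indepEulerChar_insert_eq_sub {W : Type*} [AddCommGroup W] [Module K W] [DecidableEq ι]
    (a : ι → V) (b : ι → W) {e : ι} {F : Finset ι} (heF : e ∉ F)
    (hab : ∀ I ⊆ F, LinearIndepOn K a (insert e I : Set ι) ↔ LinearIndepOn K b (I : Set ι)) :
    indepEulerChar K a (insert e F) = indepEulerChar K a F - indepEulerChar K b F := by
  classical
  rw [indepEulerChar, sum_powerset_insert heF, sub_eq_add_neg, indepEulerChar, indepEulerChar,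
    ← sum_neg_distrib]
  congr 1
  refine sum_congr rfl fun I hI => ?_
  have hI := mem_powerset.1 hI
  rw [coe_insert, if_congr (hab I hI) rfl rfl, card_insert_of_notMem fun h => heF (hI h)]
  split_ifs <;> simp [pow_succ]

theorem indepEulerChar_insert_of_notMem_span [DecidableEq ι] (a : ι → V) {e : ι} {F : Finset ι}
    (heF : e ∉ F) (he : a e ∉ span K (a '' F)) : indepEulerChar K a (insert e F) = 0 := by
  rw [indepEulerChar_insert_eq_sub a a heF, sub_self]
  intro I hI
  have heI : e ∉ (I : Set ι) := fun h => heF (hI h)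
  rw [linearIndepOn_insert heI, and_iff_left_iff_imp]
  exact fun _ h => he (span_mono (Set.image_mono (coe_subset.2 hI)) h)

theorem indepEulerChar_insert_eq_sub_quotient [DecidableEq ι] (a : ι → V) {e : ι} {F : Finset ι}
    (heF : e ∉ F) (he : a e ≠ 0) :
    indepEulerChar K a (insert e F) =
      indepEulerChar K a F - indepEulerChar K ((K ∙ a e).mkQ ∘ a) F := by
  refine indepEulerChar_insert_eq_sub a _ heF fun I hI => ?_
  have hdisj : Disjoint {e} (I : Set ι) := Set.disjoint_singleton_left.2 fun h => heF (hI h)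
  rw [← Set.singleton_union, ← (LinearIndepOn.singleton he).quotient_iff_union hdisj,
    Set.image_singleton]

theorem indepEulerChar_of_subsingleton [Subsingleton V] (a : ι → V) (E : Finset ι) :
    indepEulerChar K a E = 1 := by
  rw [indepEulerChar, sum_eq_single_of_mem ∅ (empty_mem_powerset E)]
  · simp
  · intro I _ hI
    obtain ⟨i, hi⟩ := nonempty_iff_ne_empty.2 hI
    rw [if_neg fun h => h.ne_zero hi (Subsingleton.elim _ _)]

theorem exists_ne_zero_of_span_image_eq_top [Nontrivial V] {a : ι → V} {E : Set ι}
    (hE : span K (a '' E) = ⊤) : ∃ e ∈ E, a e ≠ 0 := by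
  by_contra! h
  have : span K (a '' E) = ⊥ := span_eq_bot.2 (by rintro _ ⟨i, hi, rfl⟩; exact h i hi)
  exact bot_ne_top (this.symm.trans hE)

theorem abs_indepEulerChar_le [FiniteDimensional K V] (a : ι → V) (E : Finset ι)
    (hE : span K (a '' E) = ⊤) :
    |indepEulerChar K a E| ≤ ((#E - 1).choose (finrank K V) : ℤ) := by
  classical
  induction E using Finset.strongInduction generalizing V with | H E ih =>
  rcases Nat.eq_zero_or_pos (finrank K V) with hd | hd
  · have := finrank_zero_iff.1 hd
    simp [indepEulerChar_of_subsingleton, hd]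
  have := finrank_pos_iff.1 hd
  obtain ⟨e, heE, he⟩ := exists_ne_zero_of_span_image_eq_top hE
  obtain ⟨F, heF, rfl⟩ : ∃ F, e ∉ F ∧ insert e F = E :=
    ⟨E.erase e, notMem_erase e E, insert_erase heE⟩
  rw [card_insert_of_notMem heF, Nat.add_sub_cancel]
  by_cases heF_span : a e ∈ span K (a '' F)
  swap
  · rw [indepEulerChar_insert_of_notMem_span a heF heF_span, abs_zero]
    positivity
  have hF : span K (a '' F) = ⊤ := by
    rwa [coe_insert, Set.image_insert_eq, span_insert_eq_span heF_span] at hE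
  have hF_quot : span K ((K ∙ a e).mkQ ∘ a '' F) = ⊤ := by
    rw [Set.image_comp, span_image, hF, Submodule.map_top, range_mkQ]
  have hrank_quot : finrank K (V ⧸ K ∙ a e) = finrank K V - 1 := by
    have := (K ∙ a e).finrank_quotient_add_finrank
    rw [finrank_span_singleton he] at this
    omega
  have hF_pos : 0 < #F := card_pos.2 <| nonempty_iff_ne_empty.2 fun h => by
    simp [h, he] at heF_span
  have hdel := ih F (ssubset_insert heF) a hF
  have hcon := ih F (ssubset_insert heF) _ hF_quot
  rw [hrank_quot] at hcon
  rw [indepEulerChar_insert_eq_sub_quotient a heF he, Nat.choose_eq_choose_pred_add hF_pos hd]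
  push_cast
  linarith [abs_sub (indepEulerChar K a F) (indepEulerChar K ((K ∙ a e).mkQ ∘ a) F)]

end IndepEulerChar

open Classical in
theorem stmt_0_general (n d : ℕ) (a : Fin n → (Fin d → ℝ))
    (hspan : Submodule.span ℝ (Set.range a) = ⊤) :
    |∑ I ∈ (Finset.univ : Finset (Fin n)).powerset,
        (if LinearIndependent ℝ (fun i : I => a i.1) then (-1 : ℤ) ^ I.card else 0)|
      ≤ ((n - 1).choose d : ℤ) := by
  have := abs_indepEulerChar_le a univ (by rwa [coe_univ, Set.image_univ])
  rwa [card_univ, Fintype.card_fin, finrank_fin_fun] at this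

open Classical in
/-- The Euler characteristic of the matroid complex of n nonzero vectors
spanning ℝ^d is at most binom(n-1, d) in absolute value. -/
theorem stmt_0 (n d : ℕ) (a : Fin n → (Fin d → ℝ))
    (hnz : ∀ i, a i ≠ 0)
    (hspan : Submodule.span ℝ (Set.range a) = ⊤) :
    |∑ I ∈ (Finset.univ : Finset (Fin n)).powerset,
        (if LinearIndependent ℝ (fun i : I => a i.1) then (-1 : ℤ) ^ I.card else 0)|
      ≤ ((n - 1).choose d : ℤ) :=
  stmt_0_general n d a hspan
end

section
/- Let $a_1,\dots,a_n$ be nonzero vectors spanning $\mathbb{R}^d$ and let $\chi(M)=\sum_{I\in\Delta(M)}(-1)^{|I|}$ be the Euler characteristic of the matroid complex. Then $\chi(M)=0$ if and only if the configuration has a coloop, i.e., there exists an index $i$ and a nonzero linear functional $\ell$ on $\mathbb{R}^d$ vanishing on $a_j$ for all $j\neq i$ but not on $a_i$. -/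
/-!
Contract an independent set `C` and restrict to a disjoint set `E`. Splitting the independent
sets according to whether they contain a fixed `e ∈ E` gives the deletion–contraction relation
`χ(E ∪ {e}, C) = χ(E, C) - χ(E, C ∪ {e})`. If `e` is a coloop, contracting it changes nothing,
so `χ = 0`. Without coloops, induction on `E` shows that `(-1) ^ (r(E ∪ C) - |C|) * χ > 0`: a loop
`e` only contributes `χ(E, C)`, and for any other `e` the contracted minor has no coloop and rank
one less, so both terms on the right have the required sign.
-/

open Finset Module Submodule

theorem Submodule.notMem_span_iff_exists_linearMap {K V : Type*} [Field K] [AddCommGroup V]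
    [Module K V] {s : Set V} {x : V} :
    x ∉ span K s ↔ ∃ ℓ : V →ₗ[K] K, (∀ y ∈ s, ℓ y = 0) ∧ ℓ x ≠ 0 := by
  constructor
  · intro hx
    obtain ⟨ℓ, hℓx, hℓ⟩ := exists_le_ker_of_notMem hx
    exact ⟨ℓ, fun y hy => hℓ (subset_span hy), hℓx⟩
  · rintro ⟨ℓ, hℓ, hℓx⟩ hx
    exact hℓx (span_le (p := LinearMap.ker ℓ) |>.mpr hℓ hx)

variable {ι V K : Type*} [Field K] [AddCommGroup V] [Module K V]

theorem finrank_span_image_eq_card {a : ι → V} {C : Finset ι} (hC : LinearIndepOn K a ↑C) :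
    finrank K (span K (a '' ↑C)) = #C := by
  rw [Set.image_eq_range, finrank_span_eq_card hC]
  simp

variable (K) (a : ι → V) [DecidableEq ι]

open Classical in
/-- The Euler characteristic of the independence complex of the minor `(M / C) ↾ E` of the matroid
`M` of `a`, when `C` is independent and disjoint from `E`. -/
noncomputable def minorEulerChar (E C : Finset ι) : ℤ :=
  ∑ I ∈ E.powerset, if LinearIndepOn K a ↑(I ∪ C) then (-1) ^ #I else 0

def HasMinorColoop (E C : Finset ι) : Prop :=
  ∃ e ∈ E, a e ∉ span K (a '' ↑(E.erase e ∪ C))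

variable {K a}

theorem minorEulerChar_insert {E : Finset ι} {e : ι} (he : e ∉ E) (C : Finset ι) :
    minorEulerChar K a (insert e E) C =
      minorEulerChar K a E C - minorEulerChar K a E (insert e C) := by
  rw [minorEulerChar, sum_powerset_insert he, sub_eq_add_neg, minorEulerChar, minorEulerChar,
    ← sum_neg_distrib]
  congr 1
  refine sum_congr rfl fun I hI => ?_
  have heI : e ∉ I := fun h => he (mem_powerset.mp hI h)
  rw [insert_union, ← union_insert, card_insert_of_notMem heI, pow_succ]
  split_ifs <;> simp

theorem minorEulerChar_of_not_linearIndepOn {C : Finset ι} (hC : ¬ LinearIndepOn K a ↑C)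
    (E : Finset ι) : minorEulerChar K a E C = 0 :=
  sum_eq_zero fun I _ => if_neg fun h => hC (h.mono (by simp))

theorem minorEulerChar_insert_of_notMem_span {E C : Finset ι} {e : ι}
    (he : a e ∉ span K (a '' ↑(E ∪ C))) :
    minorEulerChar K a E (insert e C) = minorEulerChar K a E C := by
  refine sum_congr rfl fun I hI => ?_
  have hspan : a e ∉ span K (a '' ↑(I ∪ C)) :=
    fun h => he (span_mono (Set.image_mono (by gcongr; exact mem_powerset.mp hI)) h)
  have heIC : e ∉ (↑(I ∪ C) : Set ι) := fun h => hspan (subset_span ⟨e, h, rfl⟩)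
  rw [union_insert, coe_insert, linearIndepOn_insert heIC, and_iff_left hspan]

theorem minorEulerChar_eq_zero_of_hasMinorColoop {E C : Finset ι}
    (h : HasMinorColoop K a E C) : minorEulerChar K a E C = 0 := by
  obtain ⟨e, heE, he⟩ := h
  rw [← insert_erase heE, minorEulerChar_insert (notMem_erase e E),
    minorEulerChar_insert_of_notMem_span he, sub_self]

theorem HasMinorColoop.insert_left {E C : Finset ι} {e : ι} (he : e ∉ E)
    (h : HasMinorColoop K a E (insert e C)) : HasMinorColoop K a (insert e E) C := by
  obtain ⟨f, hfE, hf⟩ := h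
  have hfe : e ≠ f := fun h => he (h ▸ hfE)
  refine ⟨f, mem_insert_of_mem hfE, ?_⟩
  rwa [erase_insert_of_ne hfe, insert_union, ← union_insert]

theorem hasMinorColoop_insert_iff_of_mem_span {E C : Finset ι} {e : ι}
    (he : a e ∈ span K (a '' ↑C)) :
    HasMinorColoop K a E (insert e C) ↔ HasMinorColoop K a E C := by
  have hspan (f : ι) :
      span K (a '' ↑(E.erase f ∪ insert e C)) = span K (a '' ↑(E.erase f ∪ C)) := by
    rw [union_insert, coe_insert, Set.image_insert_eq, span_insert_eq_span]
    exact span_mono (Set.image_mono (by simp)) he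
  simp only [HasMinorColoop, hspan]

-- `+ #C` has the parity of the rank `r(E ∪ C) - #C` of the minor, without truncated subtraction.
theorem sign_mul_minorEulerChar_pos {E C : Finset ι} (hC : LinearIndepOn K a ↑C)
    (hEC : Disjoint E C) (h : ¬ HasMinorColoop K a E C) :
    0 < (-1) ^ (finrank K (span K (a '' ↑(E ∪ C))) + #C) * minorEulerChar K a E C := by
  induction E using Finset.induction_on generalizing C with
  | empty =>
    rw [minorEulerChar, powerset_empty, sum_singleton, empty_union, if_pos hC,
      finrank_span_image_eq_card hC, Even.neg_one_pow ⟨#C, rfl⟩]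
    simp
  | insert e E he ih =>
    have heC : e ∉ C := disjoint_left.mp hEC (mem_insert_self e E)
    have hEC' : Disjoint E C := disjoint_of_subset_left (subset_insert e E) hEC
    have h_nonneg : ∀ {C : Finset ι}, LinearIndepOn K a ↑C → Disjoint E C →
        0 ≤ (-1) ^ (finrank K (span K (a '' ↑(E ∪ C))) + #C) * minorEulerChar K a E C := by
      intro C hC hEC
      by_cases hcol : HasMinorColoop K a E C
      · rw [minorEulerChar_eq_zero_of_hasMinorColoop hcol, mul_zero]
      · exact (ih hC hEC hcol).le
    have he_span : a e ∈ span K (a '' ↑(E ∪ C)) := by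
      by_contra he'
      exact h ⟨e, mem_insert_self e E, by rwa [erase_insert he]⟩
    have hrank : span K (a '' ↑(insert e E ∪ C)) = span K (a '' ↑(E ∪ C)) := by
      rw [insert_union, coe_insert, Set.image_insert_eq, span_insert_eq_span he_span]
    rw [minorEulerChar_insert he, hrank]
    by_cases hloop : a e ∈ span K (a '' ↑C)
    · have hCe : ¬ LinearIndepOn K a ↑(insert e C) := by
        rw [coe_insert, linearIndepOn_insert (by simpa using heC)]
        exact fun h => h.2 hloop
      rw [minorEulerChar_of_not_linearIndepOn hCe, sub_zero]
      refine ih hC hEC' fun hcol => h ?_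
      exact ((hasMinorColoop_insert_iff_of_mem_span hloop).mpr hcol).insert_left he
    · have hCe : LinearIndepOn K a ↑(insert e C) := by
        rw [coe_insert, linearIndepOn_insert (by simpa using heC)]
        exact ⟨hC, hloop⟩
      have hEC'' : Disjoint E (insert e C) := disjoint_insert_right.mpr ⟨he, hEC'⟩
      have hpos := ih hCe hEC'' fun hcol => h (hcol.insert_left he)
      rw [union_insert, ← insert_union, hrank, card_insert_of_notMem heC, ← add_assoc,
        pow_succ] at hpos
      have := h_nonneg hC hEC'
      linarith

theorem minorEulerChar_eq_zero_iff {E C : Finset ι} (hC : LinearIndepOn K a ↑C)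
    (hEC : Disjoint E C) : minorEulerChar K a E C = 0 ↔ HasMinorColoop K a E C := by
  refine ⟨fun h0 => ?_, minorEulerChar_eq_zero_of_hasMinorColoop⟩
  by_contra h
  simpa [h0] using sign_mul_minorEulerChar_pos hC hEC h

theorem hasMinorColoop_univ_empty_iff [Fintype ι] :
    HasMinorColoop K a univ ∅ ↔
      ∃ (i : ι) (ℓ : V →ₗ[K] K), ℓ ≠ 0 ∧ (∀ j, j ≠ i → ℓ (a j) = 0) ∧ ℓ (a i) ≠ 0 := by
  simp only [HasMinorColoop, union_empty, notMem_span_iff_exists_linearMap]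
  constructor
  · rintro ⟨i, -, ℓ, hℓ, hℓi⟩
    exact ⟨i, ℓ, fun h => hℓi (by simp [h]), fun j hj => hℓ _ ⟨j, by simpa using hj, rfl⟩, hℓi⟩
  · rintro ⟨i, ℓ, -, hℓ, hℓi⟩
    refine ⟨i, mem_univ i, ℓ, ?_, hℓi⟩
    rintro _ ⟨j, hj, rfl⟩
    exact hℓ j (by simpa using hj)

open Classical in
theorem stmt_2_general (n d : ℕ) (a : Fin n → (Fin d → ℝ)) :
    (∑ I ∈ (Finset.univ : Finset (Fin n)).powerset,
        (if LinearIndependent ℝ (fun i : I => a i.1) then (-1 : ℤ) ^ I.card else 0)) = 0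
      ↔ ∃ (i : Fin n) (ℓ : (Fin d → ℝ) →ₗ[ℝ] ℝ),
          ℓ ≠ 0 ∧ (∀ j, j ≠ i → ℓ (a j) = 0) ∧ ℓ (a i) ≠ 0 := by
  have hχ := minorEulerChar_eq_zero_iff (K := ℝ) (a := a) (E := univ)
    (C := ∅) (by simp [linearIndepOn_empty]) (disjoint_empty_right _)
  simp only [minorEulerChar, union_empty] at hχ
  exact hχ.trans hasMinorColoop_univ_empty_iff

open Classical in
/-- χ(M) = 0 iff the configuration has a coloop: an index i and a nonzero
linear functional vanishing on all a_j, j ≠ i, but not on a_i. -/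
theorem stmt_2 (n d : ℕ) (a : Fin n → (Fin d → ℝ))
    (hnz : ∀ i, a i ≠ 0)
    (hspan : Submodule.span ℝ (Set.range a) = ⊤) :
    (∑ I ∈ (Finset.univ : Finset (Fin n)).powerset,
        (if LinearIndependent ℝ (fun i : I => a i.1) then (-1 : ℤ) ^ I.card else 0)) = 0
      ↔ ∃ (i : Fin n) (ℓ : (Fin d → ℝ) →ₗ[ℝ] ℝ),
          ℓ ≠ 0 ∧ (∀ j, j ≠ i → ℓ (a j) = 0) ∧ ℓ (a i) ≠ 0 :=
  stmt_2_general n d a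
end

section
/- The rational function $R_1(x,y) = x_1^2/((x_1y_2-x_2y_1)(x_1y_3-x_3y_1)y_1)$ in variables $x_1,x_2,x_3,y_1,y_2,y_3$ satisfies the three equations $\partial_{x_1}\partial_{y_2}R_1 = \partial_{x_2}\partial_{y_1}R_1$, $\partial_{x_1}\partial_{y_3}R_1 = \partial_{x_3}\partial_{y_1}R_1$, and $\partial_{x_2}\partial_{y_3}R_1 = \partial_{x_3}\partial_{y_2}R_1$ on the open set where $y_1(x_1y_2-x_2y_1)(x_1y_3-x_3y_1)\neq 0$. -/
open Function Filter Topology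

/-- Partial derivative of a function of 6 complex variables in the i-th variable. -/
noncomputable def pd6 (i : Fin 6) (f : (Fin 6 → ℂ) → ℂ) : (Fin 6 → ℂ) → ℂ :=
  fun v => deriv (fun t => f (Function.update v i t)) (v i)

/-- R₁ = x₁²/((x₁y₂-x₂y₁)(x₁y₃-x₃y₁)y₁), with x = (v 0, v 1, v 2), y = (v 3, v 4, v 5). -/
noncomputable def R1fun : (Fin 6 → ℂ) → ℂ :=
  fun v => (v 0) ^ 2 / ((v 0 * v 4 - v 1 * v 3) * (v 0 * v 5 - v 2 * v 3) * v 3)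

namespace Stmt4Aux

/-- Explicit formula for ∂_{y₁} R₁. -/
noncomputable def g3 : (Fin 6 → ℂ) → ℂ := fun w =>
  (w 0)^2 * (w 1 * (w 0 * w 5 - w 2 * w 3) * w 3 + w 2 * (w 0 * w 4 - w 1 * w 3) * w 3
      - (w 0 * w 4 - w 1 * w 3) * (w 0 * w 5 - w 2 * w 3)) /
    ((w 0 * w 4 - w 1 * w 3)^2 * (w 0 * w 5 - w 2 * w 3)^2 * (w 3)^2)

/-- Explicit formula for ∂_{y₂} R₁. -/
noncomputable def g4 : (Fin 6 → ℂ) → ℂ := fun w =>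
  -(w 0)^3 / ((w 0 * w 4 - w 1 * w 3)^2 * (w 0 * w 5 - w 2 * w 3) * w 3)

/-- Explicit formula for ∂_{y₃} R₁. -/
noncomputable def g5 : (Fin 6 → ℂ) → ℂ := fun w =>
  -(w 0)^3 / ((w 0 * w 4 - w 1 * w 3) * (w 0 * w 5 - w 2 * w 3)^2 * w 3)

def U : Set (Fin 6 → ℂ) :=
  {w | w 0 * w 4 - w 1 * w 3 ≠ 0 ∧ w 0 * w 5 - w 2 * w 3 ≠ 0 ∧ w 3 ≠ 0}

lemma isOpen_U : IsOpen U := by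
  have h1 : Continuous fun w : Fin 6 → ℂ => w 0 * w 4 - w 1 * w 3 := by fun_prop
  have h2 : Continuous fun w : Fin 6 → ℂ => w 0 * w 5 - w 2 * w 3 := by fun_prop
  have h3 : Continuous fun w : Fin 6 → ℂ => w 3 := by fun_prop
  have : U = (fun w : Fin 6 → ℂ => w 0 * w 4 - w 1 * w 3) ⁻¹' {(0:ℂ)}ᶜ ∩
      ((fun w : Fin 6 → ℂ => w 0 * w 5 - w 2 * w 3) ⁻¹' {(0:ℂ)}ᶜ ∩
        (fun w : Fin 6 → ℂ => w 3) ⁻¹' {(0:ℂ)}ᶜ) := rfl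
  rw [this]
  exact (isOpen_compl_singleton.preimage h1).inter
    ((isOpen_compl_singleton.preimage h2).inter (isOpen_compl_singleton.preimage h3))

lemma mem_eventually {v : Fin 6 → ℂ} (hv : v ∈ U) (i : Fin 6) :
    ∀ᶠ t in 𝓝 (v i), Function.update v i t ∈ U := by
  have hc : ContinuousAt (Function.update v i) (v i) :=
    (hasDerivAt_update v i (v i)).continuousAt
  have : Function.update v i (v i) ∈ U := by rwa [Function.update_eq_self]
  exact hc.preimage_mem_nhds (isOpen_U.mem_nhds this)

lemma pd3_eq (w : Fin 6 → ℂ) (hw : w ∈ U) : pd6 3 R1fun w = g3 w := by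
  obtain ⟨h1, h2, h3⟩ := hw
  have hF : (fun t => R1fun (Function.update w 3 t)) =
      fun t => (w 0)^2 / ((w 0 * w 4 - w 1 * t) * (w 0 * w 5 - w 2 * t) * t) := by
    funext t; simp [R1fun, Function.update_apply]
  have hL1 : HasDerivAt (fun t : ℂ => w 0 * w 4 - w 1 * t) (0 - w 1 * 1) (w 3) :=
    (hasDerivAt_const _ _).sub ((hasDerivAt_id _).const_mul (w 1))
  have hL2 : HasDerivAt (fun t : ℂ => w 0 * w 5 - w 2 * t) (0 - w 2 * 1) (w 3) :=
    (hasDerivAt_const _ _).sub ((hasDerivAt_id _).const_mul (w 2))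
  have hD := (hL1.mul hL2).mul (hasDerivAt_id (w 3))
  simp only [id_eq] at hD
  have hN : HasDerivAt (fun _ : ℂ => (w 0)^2) 0 (w 3) := hasDerivAt_const _ _
  have hd0 : (w 0 * w 4 - w 1 * w 3) * (w 0 * w 5 - w 2 * w 3) * w 3 ≠ 0 :=
    mul_ne_zero (mul_ne_zero h1 h2) h3
  have h := (hN.div hD hd0).deriv
  simp only [Pi.div_def, Pi.mul_def, Pi.neg_def, Pi.pow_def, Pi.sub_def, Pi.add_def, id_eq] at h
  rw [pd6, hF, h, g3]
  field_simp
  ring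

lemma pd4_eq (w : Fin 6 → ℂ) (hw : w ∈ U) : pd6 4 R1fun w = g4 w := by
  obtain ⟨h1, h2, h3⟩ := hw
  have hF : (fun t => R1fun (Function.update w 4 t)) =
      fun t => (w 0)^2 / ((w 0 * t - w 1 * w 3) * (w 0 * w 5 - w 2 * w 3) * w 3) := by
    funext t; simp [R1fun, Function.update_apply]
  have hD := ((((hasDerivAt_id (w 4)).const_mul (w 0)).sub_const (w 1 * w 3)).mul_const
      (w 0 * w 5 - w 2 * w 3)).mul_const (w 3)
  simp only [id_eq] at hD
  have hN : HasDerivAt (fun _ : ℂ => (w 0)^2) 0 (w 4) := hasDerivAt_const _ _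
  have hd0 : (w 0 * w 4 - w 1 * w 3) * (w 0 * w 5 - w 2 * w 3) * w 3 ≠ 0 :=
    mul_ne_zero (mul_ne_zero h1 h2) h3
  have h := (hN.div hD hd0).deriv
  simp only [Pi.div_def, Pi.mul_def, Pi.neg_def, Pi.pow_def, Pi.sub_def, Pi.add_def, id_eq] at h
  rw [pd6, hF, h, g4]
  field_simp
  ring

lemma pd5_eq (w : Fin 6 → ℂ) (hw : w ∈ U) : pd6 5 R1fun w = g5 w := by
  obtain ⟨h1, h2, h3⟩ := hw
  have hF : (fun t => R1fun (Function.update w 5 t)) =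
      fun t => (w 0)^2 / ((w 0 * w 4 - w 1 * w 3) * (w 0 * t - w 2 * w 3) * w 3) := by
    funext t; simp [R1fun, Function.update_apply]
  have hD := ((((hasDerivAt_id (w 5)).const_mul (w 0)).sub_const (w 2 * w 3)).const_mul
      (w 0 * w 4 - w 1 * w 3)).mul_const (w 3)
  simp only [id_eq] at hD
  have hN : HasDerivAt (fun _ : ℂ => (w 0)^2) 0 (w 5) := hasDerivAt_const _ _
  have hd0 : (w 0 * w 4 - w 1 * w 3) * (w 0 * w 5 - w 2 * w 3) * w 3 ≠ 0 :=
    mul_ne_zero (mul_ne_zero h1 h2) h3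
  have h := (hN.div hD hd0).deriv
  simp only [Pi.div_def, Pi.mul_def, Pi.neg_def, Pi.pow_def, Pi.sub_def, Pi.add_def, id_eq] at h
  rw [pd6, hF, h, g5]
  field_simp
  ring

end Stmt4Aux

open Stmt4Aux

/-- R₁ satisfies the toric equations ∂ₓᵢ∂_yⱼ R₁ = ∂ₓⱼ∂_yᵢ R₁ on the set where
its denominator is nonzero. -/
theorem stmt_4 (v : Fin 6 → ℂ)
    (h : v 3 * (v 0 * v 4 - v 1 * v 3) * (v 0 * v 5 - v 2 * v 3) ≠ 0) :
    pd6 0 (pd6 4 R1fun) v = pd6 1 (pd6 3 R1fun) v ∧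
    pd6 0 (pd6 5 R1fun) v = pd6 2 (pd6 3 R1fun) v ∧
    pd6 1 (pd6 5 R1fun) v = pd6 2 (pd6 4 R1fun) v := by
  have h3 : v 3 ≠ 0 := left_ne_zero_of_mul (left_ne_zero_of_mul h)
  have h1 : v 0 * v 4 - v 1 * v 3 ≠ 0 := right_ne_zero_of_mul (left_ne_zero_of_mul h)
  have h2 : v 0 * v 5 - v 2 * v 3 ≠ 0 := right_ne_zero_of_mul h
  have hv : v ∈ U := ⟨h1, h2, h3⟩
  refine ⟨?_, ?_, ?_⟩
  · -- ∂₀∂₄ = ∂₁∂₃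
    have eL : pd6 0 (pd6 4 R1fun) v = deriv (fun t => g4 (Function.update v 0 t)) (v 0) := by
      have hEv : (fun t => pd6 4 R1fun (Function.update v 0 t)) =ᶠ[𝓝 (v 0)]
          (fun t => g4 (Function.update v 0 t)) := by
        filter_upwards [mem_eventually hv 0] with t ht using pd4_eq _ ht
      exact hEv.deriv_eq
    have hFL : (fun t => g4 (Function.update v 0 t)) =
        fun t => -t^3 / ((t * v 4 - v 1 * v 3)^2 * (t * v 5 - v 2 * v 3) * v 3) := by
      funext t; simp [g4, Function.update_apply]
    have hNL := (hasDerivAt_pow 3 (v 0)).neg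
    have hDL := ((((hasDerivAt_id (v 0)).mul_const (v 4)).sub_const (v 1 * v 3)).pow 2).mul
        (((hasDerivAt_id (v 0)).mul_const (v 5)).sub_const (v 2 * v 3)) |>.mul_const (v 3)
    simp only [id_eq] at hDL
    have hd0L : (v 0 * v 4 - v 1 * v 3)^2 * (v 0 * v 5 - v 2 * v 3) * v 3 ≠ 0 :=
      mul_ne_zero (mul_ne_zero (pow_ne_zero _ h1) h2) h3
    have hLval := (hNL.div hDL hd0L).deriv
    simp only [Pi.div_def, Pi.mul_def, Pi.neg_def, Pi.pow_def, Pi.sub_def, Pi.add_def, id_eq] at hLval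
    -- RHS
    have eR : pd6 1 (pd6 3 R1fun) v = deriv (fun t => g3 (Function.update v 1 t)) (v 1) := by
      have hEv : (fun t => pd6 3 R1fun (Function.update v 1 t)) =ᶠ[𝓝 (v 1)]
          (fun t => g3 (Function.update v 1 t)) := by
        filter_upwards [mem_eventually hv 1] with t ht using pd3_eq _ ht
      exact hEv.deriv_eq
    have hFR : (fun t => g3 (Function.update v 1 t)) =
        fun t => (v 0)^2 * (t * (v 0 * v 5 - v 2 * v 3) * v 3 + v 2 * (v 0 * v 4 - t * v 3) * v 3
            - (v 0 * v 4 - t * v 3) * (v 0 * v 5 - v 2 * v 3)) /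
          ((v 0 * v 4 - t * v 3)^2 * (v 0 * v 5 - v 2 * v 3)^2 * (v 3)^2) := by
      funext t; simp [g3, Function.update_apply]
    have hLin : HasDerivAt (fun t : ℂ => v 0 * v 4 - t * v 3) (0 - 1 * v 3) (v 1) :=
      (hasDerivAt_const _ _).sub ((hasDerivAt_id _).mul_const (v 3))
    have hNR := (((((hasDerivAt_id (v 1)).mul_const (v 0 * v 5 - v 2 * v 3)).mul_const (v 3)).add
        ((hLin.const_mul (v 2)).mul_const (v 3))).sub
        (hLin.mul_const (v 0 * v 5 - v 2 * v 3))).const_mul ((v 0)^2)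
    have hDR := ((hLin.pow 2).mul_const ((v 0 * v 5 - v 2 * v 3)^2)).mul_const ((v 3)^2)
    simp only [id_eq] at hNR hDR
    have hd0R : (v 0 * v 4 - v 1 * v 3)^2 * (v 0 * v 5 - v 2 * v 3)^2 * (v 3)^2 ≠ 0 :=
      mul_ne_zero (mul_ne_zero (pow_ne_zero _ h1) (pow_ne_zero _ h2)) (pow_ne_zero _ h3)
    have hRval := (hNR.div hDR hd0R).deriv
    simp only [Pi.div_def, Pi.mul_def, Pi.neg_def, Pi.pow_def, Pi.sub_def, Pi.add_def, id_eq] at hRval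
    rw [eL, hFL, hLval, eR, hFR, hRval]
    field_simp
    ring
  · -- ∂₀∂₅ = ∂₂∂₃
    have eL : pd6 0 (pd6 5 R1fun) v = deriv (fun t => g5 (Function.update v 0 t)) (v 0) := by
      have hEv : (fun t => pd6 5 R1fun (Function.update v 0 t)) =ᶠ[𝓝 (v 0)]
          (fun t => g5 (Function.update v 0 t)) := by
        filter_upwards [mem_eventually hv 0] with t ht using pd5_eq _ ht
      exact hEv.deriv_eq
    have hFL : (fun t => g5 (Function.update v 0 t)) =
        fun t => -t^3 / ((t * v 4 - v 1 * v 3) * (t * v 5 - v 2 * v 3)^2 * v 3) := by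
      funext t; simp [g5, Function.update_apply]
    have hNL := (hasDerivAt_pow 3 (v 0)).neg
    have hDL := (((hasDerivAt_id (v 0)).mul_const (v 4)).sub_const (v 1 * v 3)).mul
        ((((hasDerivAt_id (v 0)).mul_const (v 5)).sub_const (v 2 * v 3)).pow 2) |>.mul_const (v 3)
    simp only [id_eq] at hDL
    have hd0L : (v 0 * v 4 - v 1 * v 3) * (v 0 * v 5 - v 2 * v 3)^2 * v 3 ≠ 0 :=
      mul_ne_zero (mul_ne_zero h1 (pow_ne_zero _ h2)) h3
    have hLval := (hNL.div hDL hd0L).deriv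
    simp only [Pi.div_def, Pi.mul_def, Pi.neg_def, Pi.pow_def, Pi.sub_def, Pi.add_def, id_eq] at hLval
    have eR : pd6 2 (pd6 3 R1fun) v = deriv (fun t => g3 (Function.update v 2 t)) (v 2) := by
      have hEv : (fun t => pd6 3 R1fun (Function.update v 2 t)) =ᶠ[𝓝 (v 2)]
          (fun t => g3 (Function.update v 2 t)) := by
        filter_upwards [mem_eventually hv 2] with t ht using pd3_eq _ ht
      exact hEv.deriv_eq
    have hFR : (fun t => g3 (Function.update v 2 t)) =
        fun t => (v 0)^2 * (v 1 * (v 0 * v 5 - t * v 3) * v 3 + t * (v 0 * v 4 - v 1 * v 3) * v 3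
            - (v 0 * v 4 - v 1 * v 3) * (v 0 * v 5 - t * v 3)) /
          ((v 0 * v 4 - v 1 * v 3)^2 * (v 0 * v 5 - t * v 3)^2 * (v 3)^2) := by
      funext t; simp [g3, Function.update_apply]
    have hLin : HasDerivAt (fun t : ℂ => v 0 * v 5 - t * v 3) (0 - 1 * v 3) (v 2) :=
      (hasDerivAt_const _ _).sub ((hasDerivAt_id _).mul_const (v 3))
    have hNR := ((((hLin.const_mul (v 1)).mul_const (v 3)).add
        ((((hasDerivAt_id (v 2)).mul_const (v 0 * v 4 - v 1 * v 3)).mul_const (v 3)))).sub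
        (hLin.const_mul (v 0 * v 4 - v 1 * v 3))).const_mul ((v 0)^2)
    have hDR := ((hLin.pow 2).const_mul ((v 0 * v 4 - v 1 * v 3)^2)).mul_const ((v 3)^2)
    simp only [id_eq] at hNR hDR
    have hd0R : (v 0 * v 4 - v 1 * v 3)^2 * (v 0 * v 5 - v 2 * v 3)^2 * (v 3)^2 ≠ 0 :=
      mul_ne_zero (mul_ne_zero (pow_ne_zero _ h1) (pow_ne_zero _ h2)) (pow_ne_zero _ h3)
    have hRval := (hNR.div hDR hd0R).deriv
    simp only [Pi.div_def, Pi.mul_def, Pi.neg_def, Pi.pow_def, Pi.sub_def, Pi.add_def, id_eq] at hRval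
    rw [eL, hFL, hLval, eR, hFR, hRval]
    field_simp
    ring
  · -- ∂₁∂₅ = ∂₂∂₄
    have eL : pd6 1 (pd6 5 R1fun) v = deriv (fun t => g5 (Function.update v 1 t)) (v 1) := by
      have hEv : (fun t => pd6 5 R1fun (Function.update v 1 t)) =ᶠ[𝓝 (v 1)]
          (fun t => g5 (Function.update v 1 t)) := by
        filter_upwards [mem_eventually hv 1] with t ht using pd5_eq _ ht
      exact hEv.deriv_eq
    have hFL : (fun t => g5 (Function.update v 1 t)) =
        fun t => -(v 0)^3 / ((v 0 * v 4 - t * v 3) * (v 0 * v 5 - v 2 * v 3)^2 * v 3) := by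
      funext t; simp [g5, Function.update_apply]
    have hNL : HasDerivAt (fun _ : ℂ => -(v 0)^3) 0 (v 1) := hasDerivAt_const _ _
    have hLinL : HasDerivAt (fun t : ℂ => v 0 * v 4 - t * v 3) (0 - 1 * v 3) (v 1) :=
      (hasDerivAt_const _ _).sub ((hasDerivAt_id _).mul_const (v 3))
    have hDL := (hLinL.mul_const ((v 0 * v 5 - v 2 * v 3)^2)).mul_const (v 3)
    have hd0L : (v 0 * v 4 - v 1 * v 3) * (v 0 * v 5 - v 2 * v 3)^2 * v 3 ≠ 0 :=
      mul_ne_zero (mul_ne_zero h1 (pow_ne_zero _ h2)) h3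
    have hLval := (hNL.div hDL hd0L).deriv
    simp only [Pi.div_def, Pi.mul_def, Pi.neg_def, Pi.pow_def, Pi.sub_def, Pi.add_def, id_eq] at hLval
    have eR : pd6 2 (pd6 4 R1fun) v = deriv (fun t => g4 (Function.update v 2 t)) (v 2) := by
      have hEv : (fun t => pd6 4 R1fun (Function.update v 2 t)) =ᶠ[𝓝 (v 2)]
          (fun t => g4 (Function.update v 2 t)) := by
        filter_upwards [mem_eventually hv 2] with t ht using pd4_eq _ ht
      exact hEv.deriv_eq
    have hFR : (fun t => g4 (Function.update v 2 t)) =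
        fun t => -(v 0)^3 / ((v 0 * v 4 - v 1 * v 3)^2 * (v 0 * v 5 - t * v 3) * v 3) := by
      funext t; simp [g4, Function.update_apply]
    have hNR : HasDerivAt (fun _ : ℂ => -(v 0)^3) 0 (v 2) := hasDerivAt_const _ _
    have hLinR : HasDerivAt (fun t : ℂ => v 0 * v 5 - t * v 3) (0 - 1 * v 3) (v 2) :=
      (hasDerivAt_const _ _).sub ((hasDerivAt_id _).mul_const (v 3))
    have hDR := (hLinR.const_mul ((v 0 * v 4 - v 1 * v 3)^2)).mul_const (v 3)
    have hd0R : (v 0 * v 4 - v 1 * v 3)^2 * (v 0 * v 5 - v 2 * v 3) * v 3 ≠ 0 :=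
      mul_ne_zero (mul_ne_zero (pow_ne_zero _ h1) h2) h3
    have hRval := (hNR.div hDR hd0R).deriv
    simp only [Pi.div_def, Pi.mul_def, Pi.neg_def, Pi.pow_def, Pi.sub_def, Pi.add_def, id_eq] at hRval
    rw [eL, hFL, hLval, eR, hFR, hRval]
    field_simp
    ring
end

section
/- Let $a_1,\dots,a_n\in\mathbb{Z}^d$ span $\mathbb{R}^d$ and let $A$ be the Lawrence lifting, the $(n+d)\times 2n$ integer matrix (I_n I_n; 0 M). Then the matroid-complex Euler characteristic of the columns of $A$ equals that of $M=(a_1,\dots,a_n)$ in absolute value: $|\chi(A)| = |\chi(M)|$, where $\chi$ denotes $\sum_{I\text{ independent}}(-1)^{|I|}$ over the respective matroid complexes. -/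
/-!
A set `L ⊔ R` of Lawrence columns `(eᵢ, 0)`, `i ∈ L`, and `(eᵢ, aᵢ)`, `i ∈ R`, is independent
iff `(aᵢ)_{i ∈ L ∩ R}` is: the first block row forces the coefficients off `L ∩ R` to vanish and
those of `(eᵢ, 0)` and `(eᵢ, aᵢ)` for `i ∈ L ∩ R` to be opposite. Hence
`χ(A) = ∑_{L,R} (-1)^(|L|+|R|) g(L ∩ R)` with `g` the indicator of independence in `M`. For
`L ≠ [n]`, toggling a fixed `j ∉ L` in `R` flips the sign and keeps `L ∩ R`, so only `L = [n]`
contributes and `χ(A) = (-1)^n χ(M)`.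
-/

/-- The 2n columns of the Lawrence lifting (Iₙ Iₙ; 0 M): the first n are
(eᵢ, 0), the second n are (eᵢ, aᵢ). -/
def lawrenceCol (d n : ℕ) (a : Fin n → (Fin d → ℤ)) :
    Fin n ⊕ Fin n → (Fin n → ℚ) × (Fin d → ℚ) :=
  Sum.elim (fun i => (Pi.single i 1, 0))
    (fun i => (Pi.single i 1, fun r => (a i r : ℚ)))

open Finset

section Lawrence

variable {K V ι : Type*} [Ring K] [AddCommGroup V] [Module K V] [DecidableEq ι]

-- `lawrenceCol d n a` is `lawrenceLift ℚ (fun i r => (a i r : ℚ))` by definition.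
variable (K) in
def lawrenceLift (v : ι → V) : ι ⊕ ι → (ι → K) × V :=
  Sum.elim (fun i => (Pi.single i 1, 0)) (fun i => (Pi.single i 1, v i))

lemma sum_disjSum_smul_lawrenceLift (v : ι → V) (s t : Finset ι) (f : ι ⊕ ι → K) :
    ∑ x ∈ s.disjSum t, f x • lawrenceLift K v x =
      (fun j => (if j ∈ s then f (.inl j) else 0) + (if j ∈ t then f (.inr j) else 0),
        ∑ i ∈ t, f (.inr i) • v i) := by
  ext j <;> simp [lawrenceLift, sum_disjSum, Prod.fst_sum, Prod.snd_sum, Finset.sum_apply,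
    Pi.single_apply]

theorem linearIndepOn_lawrenceLift_disjSum_iff (v : ι → V) (s t : Finset ι) :
    LinearIndepOn K (lawrenceLift K v) (s.disjSum t : Set (ι ⊕ ι)) ↔
      LinearIndepOn K v (s ∩ t : Finset ι) := by
  simp only [linearIndepOn_finset_iff, sum_disjSum_smul_lawrenceLift, Prod.ext_iff, funext_iff,
    Pi.zero_apply, Prod.fst_zero, Prod.snd_zero]
  constructor
  · intro h g hg i hi
    obtain ⟨his, hit⟩ := mem_inter.1 hi
    set f : ι ⊕ ι → K :=
      Sum.elim (fun j => if j ∈ t then -g j else 0) (fun j => if j ∈ s then g j else 0)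
    have hfst : ∀ j, (if j ∈ s then f (.inl j) else 0) + (if j ∈ t then f (.inr j) else 0) = 0 :=
      fun j => by by_cases hjs : j ∈ s <;> by_cases hjt : j ∈ t <;> simp [f, hjs, hjt]
    have hsnd : ∑ i ∈ t, f (.inr i) • v i = 0 := by
      simpa [f, ite_smul, sum_ite_mem, inter_comm] using hg
    simpa [f, his] using h f ⟨hfst, hsnd⟩ (.inr i) (inr_mem_disjSum.2 hit)
  · rintro h f ⟨hfst, hsnd⟩
    have hr_out : ∀ j ∈ t, j ∉ s → f (.inr j) = 0 := fun j hjt hjs => by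
      simpa [hjt, hjs] using hfst j
    have hr : ∀ j ∈ s ∩ t, f (.inr j) = 0 := by
      refine h (f ∘ .inr) ?_
      rw [← hsnd]
      refine sum_subset inter_subset_right fun j hjt hj => ?_
      rw [Function.comp_apply, hr_out j hjt fun hjs => hj (mem_inter.2 ⟨hjs, hjt⟩), zero_smul]
    rintro (j | j) hj
    · rw [inl_mem_disjSum] at hj
      by_cases hjt : j ∈ t
      · simpa [hj, hjt, hr j (mem_inter.2 ⟨hj, hjt⟩)] using hfst j
      · simpa [hj, hjt] using hfst j
    · rw [inr_mem_disjSum] at hj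
      by_cases hjs : j ∈ s
      · exact hr j (mem_inter.2 ⟨hjs, hj⟩)
      · exact hr_out j hj hjs

end Lawrence

section SignedSums

variable {α M : Type*} [DecidableEq α] [CommRing M]

lemma sum_powerset_neg_one_pow_card_mul_inter_of_notMem {s u : Finset α} {j : α}
    (hjs : j ∈ s) (hju : j ∉ u) (f : Finset α → M) :
    ∑ t ∈ s.powerset, (-1) ^ #t * f (u ∩ t) = 0 := by
  rw [← insert_erase hjs, sum_powerset_insert (notMem_erase j s), ← sum_add_distrib]
  refine sum_eq_zero fun t ht => ?_
  have hjt : j ∉ t := fun h => notMem_erase j s (mem_powerset.1 ht h)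
  rw [card_insert_of_notMem hjt, inter_insert_of_notMem hju, pow_succ]
  ring

theorem sum_powerset_sum_powerset_neg_one_pow_mul_inter [Fintype α] (f : Finset α → M) :
    ∑ u ∈ (univ : Finset α).powerset, ∑ t ∈ (univ : Finset α).powerset,
        (-1) ^ (#u + #t) * f (u ∩ t) =
      (-1) ^ Fintype.card α * ∑ t ∈ (univ : Finset α).powerset, (-1) ^ #t * f t := by
  simp_rw [pow_add, mul_assoc, ← mul_sum]
  rw [sum_eq_single univ]
  · simp
  · intro u _ hu
    obtain ⟨j, hj⟩ : ∃ j, j ∉ u := by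
      by_contra! h
      exact hu (eq_univ_iff_forall.2 h)
    rw [sum_powerset_neg_one_pow_card_mul_inter_of_notMem (mem_univ j) hj, mul_zero]
  · simp

end SignedSums

theorem sum_powerset_univ_sum_type {α β M : Type*} [Fintype α] [Fintype β] [AddCommMonoid M]
    (F : Finset (α ⊕ β) → M) :
    ∑ S ∈ (univ : Finset (α ⊕ β)).powerset, F S =
      ∑ s ∈ (univ : Finset α).powerset, ∑ t ∈ (univ : Finset β).powerset, F (s.disjSum t) := by
  simp only [powerset_univ]
  rw [← Finset.sumEquiv.symm.toEquiv.sum_comp, Fintype.sum_prod_type]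
  rfl

open Classical in
theorem stmt_19_general (d n : ℕ) (a : Fin n → (Fin d → ℤ)) :
    |∑ S ∈ (Finset.univ : Finset (Fin n ⊕ Fin n)).powerset,
        (if LinearIndependent ℚ (fun s : S => lawrenceCol d n a s.1)
          then (-1 : ℤ) ^ S.card else 0)|
      = |∑ I ∈ (Finset.univ : Finset (Fin n)).powerset,
          (if LinearIndependent ℚ (fun i : I => fun r : Fin d => (a i.1 r : ℚ))
            then (-1 : ℤ) ^ I.card else 0)| := by
  set χ : Finset (Fin n) → ℤ := fun I =>
    if LinearIndependent ℚ (fun i : I => fun r : Fin d => (a i.1 r : ℚ)) then 1 else 0 with hχ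
  have hterm : ∀ s t : Finset (Fin n),
      (if LinearIndependent ℚ (fun x : s.disjSum t => lawrenceCol d n a x.1)
        then (-1 : ℤ) ^ #(s.disjSum t) else 0) = (-1) ^ (#s + #t) * χ (s ∩ t) := fun s t => by
    rw [hχ, mul_ite, mul_one, mul_zero, card_disjSum]
    exact if_congr (linearIndepOn_lawrenceLift_disjSum_iff _ s t) rfl rfl
  rw [sum_powerset_univ_sum_type]
  simp_rw [hterm]
  rw [sum_powerset_sum_powerset_neg_one_pow_mul_inter]
  simp only [hχ, abs_mul, abs_pow, abs_neg, abs_one, one_pow, one_mul, mul_ite, mul_one, mul_zero]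

open Classical in
/-- The matroid-complex Euler characteristic of the Lawrence lifting equals
that of M = (a₁,...,aₙ) in absolute value. -/
theorem stmt_19 (d n : ℕ) (a : Fin n → (Fin d → ℤ))
    (hspan : Submodule.span ℝ (Set.range (fun i : Fin n => fun r : Fin d => (a i r : ℝ))) = ⊤) :
    |∑ S ∈ (Finset.univ : Finset (Fin n ⊕ Fin n)).powerset,
        (if LinearIndependent ℚ (fun s : S => lawrenceCol d n a s.1)
          then (-1 : ℤ) ^ S.card else 0)|
      = |∑ I ∈ (Finset.univ : Finset (Fin n)).powerset,
          (if LinearIndependent ℚ (fun i : I => fun r : Fin d => (a i.1 r : ℚ))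
            then (-1 : ℤ) ^ I.card else 0)| :=
  stmt_19_general d n a
end
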